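/- For permutations u of {1,…,k} and v of {1,…,m}, the number of balanced Rothe tableaux of the direct sum satisfies |BRT(u ⊕ v)| = C(ℓ(u)+ℓ(v), ℓ(u)) · |BRT(u)| · |BRT(v)|, where C denotes the binomial coefficient. -/

import Mathlib

/-- The Rothe diagram of a permutation of `{0, …, n-1}` (0-based indexing):
cell `(i,j)` belongs to the diagram iff `j < w i` and `i < w⁻¹ j`. -/
def rothe {n : ℕ} (w : Equiv.Perm (Fin n)) : Finset (Fin n × Fin n) :=
  Finset.univ.filter fun c => c.2 < w c.1 ∧ c.1 < w⁻¹ c.2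

/-- `ℓ(w)`: the number of inversions of `w`. -/
def plen {n : ℕ} (w : Equiv.Perm (Fin n)) : ℕ :=
  (Finset.univ.filter fun p : Fin n × Fin n => p.1 < p.2 ∧ w p.2 < w p.1).card

/-- A standard Rothe tableau of `w`: a labelling of the cells of the Rothe diagram by
`1, …, ℓ(w)` (bijectively), strictly increasing along rows and columns; the labelling
is recorded as a function on all of `Fin n × Fin n` that vanishes off the diagram. -/
def IsSRT {n : ℕ} (w : Equiv.Perm (Fin n)) (T : Fin n × Fin n → ℕ) : Prop :=
  Set.BijOn T ↑(rothe w) (Set.Icc 1 (plen w)) ∧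
  (∀ c, c ∉ rothe w → T c = 0) ∧
  (∀ c ∈ rothe w, ∀ c' ∈ rothe w, c.1 = c'.1 → c.2 < c'.2 → T c < T c') ∧
  (∀ c ∈ rothe w, ∀ c' ∈ rothe w, c.2 = c'.2 → c.1 < c'.1 → T c < T c')

noncomputable def srtCard {n : ℕ} (w : Equiv.Perm (Fin n)) : ℕ :=
  Nat.card {T : Fin n × Fin n → ℕ // IsSRT w T}

/-- The hook of a cell of the Rothe diagram. -/
def hook {n : ℕ} (w : Equiv.Perm (Fin n)) (c : Fin n × Fin n) : Finset (Fin n × Fin n) :=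
  (rothe w).filter fun d => (d.1 = c.1 ∧ c.2 ≤ d.2) ∨ (d.2 = c.2 ∧ c.1 ≤ d.1)

/-- A balanced Rothe tableau of `w`. -/
def IsBRT {n : ℕ} (w : Equiv.Perm (Fin n)) (T : Fin n × Fin n → ℕ) : Prop :=
  Set.BijOn T ↑(rothe w) (Set.Icc 1 (plen w)) ∧
  (∀ c, c ∉ rothe w → T c = 0) ∧
  ∀ c ∈ rothe w,
    ((hook w c).filter fun d => T d < T c).card
      = ((rothe w).filter fun d => d.1 = c.1 ∧ c.2 < d.2).card

noncomputable def brtCard {n : ℕ} (w : Equiv.Perm (Fin n)) : ℕ :=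
  Nat.card {T : Fin n × Fin n → ℕ // IsBRT w T}

/-- `w` contains the pattern `p`. -/
def ContainsPattern {n k : ℕ} (w : Equiv.Perm (Fin n)) (p : Equiv.Perm (Fin k)) : Prop :=
  ∃ f : Fin k → Fin n, StrictMono f ∧ ∀ s t : Fin k, w (f s) < w (f t) ↔ p s < p t

/-- The pattern 2413 (0-based one-line notation `1 3 0 2`). -/
def p2413 : Equiv.Perm (Fin 4) :=
  ⟨![1,3,0,2], ![2,0,3,1], by intro x; fin_cases x <;> rfl, by intro x; fin_cases x <;> rfl⟩

def p2431 : Equiv.Perm (Fin 4) :=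
  ⟨![1,3,2,0], ![3,0,2,1], by intro x; fin_cases x <;> rfl, by intro x; fin_cases x <;> rfl⟩

def p3142 : Equiv.Perm (Fin 4) :=
  ⟨![2,0,3,1], ![1,3,0,2], by intro x; fin_cases x <;> rfl, by intro x; fin_cases x <;> rfl⟩

def p4132 : Equiv.Perm (Fin 4) :=
  ⟨![3,0,2,1], ![1,3,2,0], by intro x; fin_cases x <;> rfl, by intro x; fin_cases x <;> rfl⟩

def p4213 : Equiv.Perm (Fin 4) :=
  ⟨![3,1,0,2], ![2,1,3,0], by intro x; fin_cases x <;> rfl, by intro x; fin_cases x <;> rfl⟩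

def p3241 : Equiv.Perm (Fin 4) :=
  ⟨![2,1,3,0], ![3,1,0,2], by intro x; fin_cases x <;> rfl, by intro x; fin_cases x <;> rfl⟩

def p132 : Equiv.Perm (Fin 3) :=
  ⟨![0,2,1], ![0,2,1], by intro x; fin_cases x <;> rfl, by intro x; fin_cases x <;> rfl⟩

/-- The adjacent transposition `s_a` (0-based: swaps `a` and `a+1`), as a permutation
of `Fin n`; it is the identity when `a+1 ≥ n`. -/
def adjT (n a : ℕ) : Equiv.Perm (Fin n) :=
  if h : a + 1 < n then Equiv.swap ⟨a, Nat.lt_of_succ_lt h⟩ ⟨a + 1, h⟩ else 1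

/-- Reduced words of `w`, written with 0-based letters `a` (`0 ≤ a ≤ n-2`). -/
def IsReducedWord {n : ℕ} (w : Equiv.Perm (Fin n)) (L : List ℕ) : Prop :=
  (∀ a ∈ L, a + 1 < n) ∧ (L.map (adjT n)).prod = w ∧ L.length = plen w

noncomputable def rwCard {n : ℕ} (w : Equiv.Perm (Fin n)) : ℕ :=
  Nat.card {L : List ℕ // IsReducedWord w L}

/-- Direct sum of two permutations. -/
def dsum {k m : ℕ} (u : Equiv.Perm (Fin k)) (v : Equiv.Perm (Fin m)) :
    Equiv.Perm (Fin (k + m)) :=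
  finSumFinEquiv.permCongr (Equiv.sumCongr u v)

def dsumSig (p q : Σ m : ℕ, Equiv.Perm (Fin m)) : Σ m : ℕ, Equiv.Perm (Fin m) :=
  ⟨p.1 + q.1, dsum p.2 q.2⟩

/-- The direct sum `w¹ ⊕ w² ⊕ ⋯ ⊕ wᵏ` of a list of permutations. -/
def dsumList (l : List (Σ m : ℕ, Equiv.Perm (Fin m))) : Σ m : ℕ, Equiv.Perm (Fin m) :=
  l.foldr dsumSig ⟨0, 1⟩

/-- `w` is decomposable if it maps `{0,…,k-1}` onto itself for some `0 < k < n`. -/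
def Decomposable {n : ℕ} (w : Equiv.Perm (Fin n)) : Prop :=
  ∃ k : ℕ, 0 < k ∧ k < n ∧ ∀ i : Fin n, (i : ℕ) < k → ((w i : ℕ)) < k

/-- The Lehmer code of `w`. -/
def lehmer {n : ℕ} (w : Equiv.Perm (Fin n)) (i : Fin n) : ℕ :=
  (Finset.univ.filter fun j : Fin n => i < j ∧ w j < w i).card

/-- The cells of the Young diagram of `lam`. -/
def yCells {m : ℕ} (lam : Fin m → ℕ) : Set (Fin m × ℕ) :=
  {c | c.2 < lam c.1}

/-- A standard Young tableau of shape `lam`. -/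
def IsSYT {m : ℕ} (lam : Fin m → ℕ) (T : Fin m × ℕ → ℕ) : Prop :=
  Set.BijOn T (yCells lam) (Set.Icc 1 (∑ i, lam i)) ∧
  (∀ c, c ∉ yCells lam → T c = 0) ∧
  (∀ c ∈ yCells lam, ∀ c' ∈ yCells lam, c.1 = c'.1 → c.2 < c'.2 → T c < T c') ∧
  (∀ c ∈ yCells lam, ∀ c' ∈ yCells lam, c.2 = c'.2 → c.1 < c'.1 → T c < T c')

/-- `f^λ`: the number of standard Young tableaux of shape `lam`. -/
noncomputable def sytCard {m : ℕ} (lam : Fin m → ℕ) : ℕ :=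
  Nat.card {T : Fin m × ℕ → ℕ // IsSYT lam T}

/-!
The Rothe diagram of `u ⊕ v` consists of a copy of `D(u)` in the upper left block and a copy of
`D(v)` in the lower right block. The two copies share no row and no column, so every hook and
every arm lies inside one of them, and the balance condition on a copy only depends on the
relative order of the labels it carries. Hence a labelling of `D(u ⊕ v)` by `1, …, ℓ(u) + ℓ(v)`
is balanced exactly when the standardizations of its restrictions to the two copies are, and it
is recovered from these two standardizations together with the set of `ℓ(u)` labels carried by
the copy of `D(u)`, which can be any `ℓ(u)`-subset of `{1, …, ℓ(u) + ℓ(v)}`.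
-/

open Finset

section Relabel

variable (S : Finset ℕ)

-- Ranks count from `1`; off their domains both maps return `0`, the label of cells outside a
-- diagram.
noncomputable def elemOfRank (x : ℕ) : ℕ :=
  if h : x ∈ Set.Icc 1 #S then S.orderEmbOfFin rfl ⟨x - 1, by grind⟩ else 0

noncomputable def rankOf (y : ℕ) : ℕ :=
  if h : y ∈ S then ((S.orderIsoOfFin rfl).symm ⟨y, h⟩ : ℕ) + 1 else 0

variable {S}

@[simp]
lemma elemOfRank_zero : elemOfRank S 0 = 0 := by simp [elemOfRank]

lemma rankOf_of_notMem {y : ℕ} (hy : y ∉ S) : rankOf S y = 0 := by simp [rankOf, hy]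

lemma strictMonoOn_elemOfRank : StrictMonoOn (elemOfRank S) (Set.Icc 1 #S) := by
  intro x hx y hy hxy
  simp only [elemOfRank, dif_pos hx, dif_pos hy]
  exact (S.orderEmbOfFin rfl).strictMono (Fin.mk_lt_mk.2 (by grind))

lemma strictMonoOn_rankOf : StrictMonoOn (rankOf S) S := by
  intro y hy z hz hyz
  simp only [rankOf, dif_pos (mem_coe.1 hy), dif_pos (mem_coe.1 hz), add_lt_add_iff_right]
  exact (S.orderIsoOfFin rfl).symm.strictMono (Subtype.mk_lt_mk.2 hyz)

lemma elemOfRank_rankOf {y : ℕ} (hy : y ∈ S) : elemOfRank S (rankOf S y) = y := by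
  have hlt := ((S.orderIsoOfFin rfl).symm ⟨y, hy⟩).isLt
  rw [rankOf, dif_pos hy, elemOfRank, dif_pos (by grind)]
  simp [← coe_orderIsoOfFin_apply]

lemma rankOf_elemOfRank {x : ℕ} (hx : x ∈ Set.Icc 1 #S) : rankOf S (elemOfRank S x) = x := by
  have hmem : elemOfRank S x ∈ S := by
    rw [elemOfRank, dif_pos hx]; exact orderEmbOfFin_mem _ _ _
  rw [rankOf, dif_pos hmem]
  simp only [elemOfRank, dif_pos hx, ← coe_orderIsoOfFin_apply, Subtype.coe_eta,
    OrderIso.symm_apply_apply]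
  grind

lemma bijOn_elemOfRank : Set.BijOn (elemOfRank S) (Set.Icc 1 #S) S := by
  refine Set.InvOn.bijOn ⟨fun x hx => rankOf_elemOfRank hx, fun y hy => elemOfRank_rankOf hy⟩
    (fun x hx => ?_) (fun y hy => ?_)
  · rw [elemOfRank, dif_pos hx]; exact orderEmbOfFin_mem _ _ _
  · have hlt := ((S.orderIsoOfFin rfl).symm ⟨y, hy⟩).isLt
    rw [rankOf, dif_pos (mem_coe.1 hy)]; grind

lemma bijOn_rankOf : Set.BijOn (rankOf S) S (Set.Icc 1 #S) :=
  bijOn_elemOfRank.symm ⟨fun _ hy => elemOfRank_rankOf hy, fun _ hx => rankOf_elemOfRank hx⟩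

end Relabel

section Labelling

variable {α : Type*}

def IsLabelling (A : Finset α) (L : Set ℕ) (T : α → ℕ) : Prop :=
  Set.BijOn T A L ∧ ∀ a, a ∉ A → T a = 0

noncomputable def standardize (A : Finset α) (T : α → ℕ) : α → ℕ :=
  rankOf (A.image T) ∘ T

variable {A : Finset α} {L : Set ℕ} {S : Finset ℕ} {T : α → ℕ}

lemma IsLabelling.coe_image (hT : IsLabelling A L T) : ↑(A.image T) = L := by
  rw [Finset.coe_image, hT.1.image_eq]

lemma IsLabelling.isLabelling_standardize (hT : IsLabelling A L T) (h0 : 0 ∉ L) :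
    IsLabelling A (Set.Icc 1 #A) (standardize A T) := by
  have hS := hT.coe_image
  refine ⟨?_, fun a ha => ?_⟩
  · rw [← card_image_of_injOn hT.1.injOn]
    exact bijOn_rankOf.comp (hS ▸ hT.1)
  · rw [standardize, Function.comp_apply, hT.2 a ha,
      rankOf_of_notMem (fun h => h0 (hS ▸ mem_coe.2 h))]

lemma IsLabelling.elemOfRank_comp_standardize (hT : IsLabelling A L T) (h0 : 0 ∉ L) :
    elemOfRank (A.image T) ∘ standardize A T = T := by
  funext a
  by_cases ha : a ∈ A
  · exact elemOfRank_rankOf (mem_image_of_mem T ha)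
  · have h0' : 0 ∉ A.image T := fun h => h0 (hT.coe_image ▸ mem_coe.2 h)
    simp [standardize, hT.2 a ha, rankOf_of_notMem h0']

lemma IsLabelling.elemOfRank_comp (hT : IsLabelling A (Set.Icc 1 #S) T) :
    IsLabelling A S (elemOfRank S ∘ T) :=
  ⟨bijOn_elemOfRank.comp hT.1, fun a ha => by simp [hT.2 a ha]⟩

lemma IsLabelling.image_elemOfRank_comp (hT : IsLabelling A (Set.Icc 1 #S) T) :
    A.image (elemOfRank S ∘ T) = S :=
  coe_injective hT.elemOfRank_comp.coe_image

lemma IsLabelling.standardize_elemOfRank_comp (hT : IsLabelling A (Set.Icc 1 #S) T)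
    (h0 : 0 ∉ S) : standardize A (elemOfRank S ∘ T) = T := by
  funext a
  rw [standardize, hT.image_elemOfRank_comp, Function.comp_apply, Function.comp_apply]
  by_cases ha : a ∈ A
  · exact rankOf_elemOfRank (hT.1.mapsTo ha)
  · rw [hT.2 a ha, elemOfRank_zero, rankOf_of_notMem h0]

def IsOrderInvariant (A : Finset α) (P : (α → ℕ) → Prop) : Prop :=
  ∀ (g : ℕ → ℕ) (T : α → ℕ), StrictMonoOn g (T '' A) → (P (g ∘ T) ↔ P T)

variable {P : (α → ℕ) → Prop}

lemma IsOrderInvariant.standardize_iff (hP : IsOrderInvariant A P) (T : α → ℕ) :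
    P (standardize A T) ↔ P T :=
  hP _ T (by rw [← Finset.coe_image]; exact strictMonoOn_rankOf)

lemma IsOrderInvariant.elemOfRank_comp_iff (hP : IsOrderInvariant A P)
    (hT : IsLabelling A (Set.Icc 1 #S) T) : P (elemOfRank S ∘ T) ↔ P T :=
  hP _ T (hT.1.image_eq ▸ strictMonoOn_elemOfRank)

end Labelling

section Shuffle

variable {α β γ : Type*} (e₁ : α ↪ γ) (e₂ : β ↪ γ)

noncomputable def glue (T₁ : α → ℕ) (T₂ : β → ℕ) : γ → ℕ :=
  Function.extend e₁ T₁ (Function.extend e₂ T₂ 0)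

variable {e₁ e₂} {A : Finset α} {B : Finset β} {T : γ → ℕ}

lemma glue_comp_left (T₁ : α → ℕ) (T₂ : β → ℕ) : glue e₁ e₂ T₁ T₂ ∘ e₁ = T₁ :=
  Function.extend_comp e₁.injective _ _

lemma glue_comp_right (he : ∀ a b, e₁ a ≠ e₂ b) (T₁ : α → ℕ) (T₂ : β → ℕ) :
    glue e₁ e₂ T₁ T₂ ∘ e₂ = T₂ := by
  funext b
  rw [Function.comp_apply, glue, Function.extend_apply' _ _ _ fun ⟨a, h⟩ => he a b h]
  exact e₂.injective.extend_apply _ _ _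

lemma glue_apply_of_notMem_range {c : γ} (h₁ : c ∉ Set.range e₁) (h₂ : c ∉ Set.range e₂)
    (T₁ : α → ℕ) (T₂ : β → ℕ) : glue e₁ e₂ T₁ T₂ c = 0 := by
  rw [glue, Function.extend_apply' _ _ _ h₁, Function.extend_apply' _ _ _ h₂, Pi.zero_apply]

variable [DecidableEq γ]

lemma IsLabelling.glue_self {L : Set ℕ} (he : ∀ a b, e₁ a ≠ e₂ b)
    (hT : IsLabelling (A.map e₁ ∪ B.map e₂) L T) : glue e₁ e₂ (T ∘ e₁) (T ∘ e₂) = T := by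
  funext c
  by_cases h₁ : c ∈ Set.range e₁
  · obtain ⟨a, rfl⟩ := h₁
    exact congrFun (glue_comp_left _ _) a
  by_cases h₂ : c ∈ Set.range e₂
  · obtain ⟨b, rfl⟩ := h₂
    exact congrFun (glue_comp_right he _ _) b
  rw [glue_apply_of_notMem_range h₁ h₂, hT.2 c (by simp_all [Set.mem_range])]

lemma IsLabelling.comp_left {L : Set ℕ} (he : ∀ a b, e₁ a ≠ e₂ b)
    (hT : IsLabelling (A.map e₁ ∪ B.map e₂) L T) : IsLabelling A ((T ∘ e₁) '' A) (T ∘ e₁) := by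
  refine ⟨(hT.1.injOn.comp e₁.injective.injOn fun a ha => ?_).bijOn_image, fun a ha => ?_⟩
  · simpa using Or.inl ha
  · exact hT.2 _ (by simpa [ha] using fun b _ h => he a b h.symm)

lemma IsLabelling.comp_right {L : Set ℕ} (he : ∀ a b, e₁ a ≠ e₂ b)
    (hT : IsLabelling (A.map e₁ ∪ B.map e₂) L T) : IsLabelling B ((T ∘ e₂) '' B) (T ∘ e₂) :=
  IsLabelling.comp_left (fun b a h => he a b h.symm) (union_comm (A.map e₁) _ ▸ hT)

lemma IsLabelling.image_comp_right {L : Finset ℕ} (he : ∀ a b, e₁ a ≠ e₂ b)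
    (hT : IsLabelling (A.map e₁ ∪ B.map e₂) L T) :
    B.image (T ∘ e₂) = L \ A.image (T ∘ e₁) := by
  ext y
  simp only [mem_image, mem_sdiff, Function.comp_apply, not_exists, not_and]
  constructor
  · rintro ⟨b, hb, rfl⟩
    refine ⟨hT.1.mapsTo (by simp [hb]), fun a ha hab => he a b ?_⟩
    exact hT.1.injOn (by simp [ha]) (by simp [hb]) hab
  · rintro ⟨hy, hyA⟩
    obtain ⟨c, hc, rfl⟩ := hT.1.surjOn (mem_coe.2 hy)
    simp only [coe_union, coe_map, Set.mem_union, Set.mem_image, mem_coe] at hc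
    rcases hc with ⟨a, ha, rfl⟩ | ⟨b, hb, rfl⟩
    · exact absurd rfl (hyA a ha)
    · exact ⟨b, hb, rfl⟩

lemma isLabelling_glue {L₁ L₂ : Set ℕ} {T₁ : α → ℕ} {T₂ : β → ℕ} (he : ∀ a b, e₁ a ≠ e₂ b)
    (h₁ : IsLabelling A L₁ T₁) (h₂ : IsLabelling B L₂ T₂) (hL : Disjoint L₁ L₂) :
    IsLabelling (A.map e₁ ∪ B.map e₂) (L₁ ∪ L₂) (glue e₁ e₂ T₁ T₂) := by
  have hbij₁ : Set.BijOn (glue e₁ e₂ T₁ T₂) (e₁ '' A) L₁ :=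
    (Set.bijOn_comp_iff e₁.injective.injOn).1 (by rw [glue_comp_left]; exact h₁.1)
  have hbij₂ : Set.BijOn (glue e₁ e₂ T₁ T₂) (e₂ '' B) L₂ :=
    (Set.bijOn_comp_iff e₂.injective.injOn).1 (by rw [glue_comp_right he]; exact h₂.1)
  refine ⟨?_, fun c hc => ?_⟩
  · rw [coe_union, coe_map, coe_map]
    refine hbij₁.union hbij₂ ((Set.injOn_union ?_).2 ⟨hbij₁.injOn, hbij₂.injOn, ?_⟩)
    · rw [Set.disjoint_left]
      rintro _ ⟨a, -, rfl⟩ ⟨b, -, hb⟩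
      exact he a b hb.symm
    · exact fun x hx y hy hxy => hL.ne_of_mem (hbij₁.mapsTo hx) (hbij₂.mapsTo hy) hxy
  · simp only [mem_union, mem_map, not_or, not_exists, not_and] at hc
    by_cases hc₁ : c ∈ Set.range e₁
    · obtain ⟨a, rfl⟩ := hc₁
      rw [← Function.comp_apply (f := glue e₁ e₂ T₁ T₂), glue_comp_left]
      exact h₁.2 a fun ha => hc.1 a ha rfl
    by_cases hc₂ : c ∈ Set.range e₂
    · obtain ⟨b, rfl⟩ := hc₂
      rw [← Function.comp_apply (f := glue e₁ e₂ T₁ T₂), glue_comp_right he]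
      exact h₂.2 b fun hb => hc.2 b hb rfl
    exact glue_apply_of_notMem_range hc₁ hc₂ _ _

lemma IsLabelling.zero_notMem_image_comp_left {n : ℕ}
    (hT : IsLabelling (A.map e₁ ∪ B.map e₂) (Set.Icc 1 n) T) : 0 ∉ (T ∘ e₁) '' A := by
  rintro ⟨a, ha, h⟩
  have := hT.1.mapsTo (by simp [mem_coe.1 ha] : e₁ a ∈ A.map e₁ ∪ B.map e₂)
  simp_all

lemma IsLabelling.zero_notMem_image_comp_right {n : ℕ}
    (hT : IsLabelling (A.map e₁ ∪ B.map e₂) (Set.Icc 1 n) T) : 0 ∉ (T ∘ e₂) '' B :=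
  IsLabelling.zero_notMem_image_comp_left (union_comm (A.map e₁) _ ▸ hT)

lemma IsLabelling.image_comp_left_mem_powersetCard (he : ∀ a b, e₁ a ≠ e₂ b)
    (hT : IsLabelling (A.map e₁ ∪ B.map e₂) (Set.Icc 1 (#A + #B)) T) :
    A.image (T ∘ e₁) ∈ (Icc 1 (#A + #B)).powersetCard #A := by
  refine mem_powersetCard.2 ⟨fun y hy => ?_, card_image_of_injOn (hT.comp_left he).1.injOn⟩
  obtain ⟨a, ha, rfl⟩ := mem_image.1 hy
  simpa using hT.1.mapsTo (by simp [ha] : e₁ a ∈ A.map e₁ ∪ B.map e₂)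

omit [DecidableEq γ] in
lemma card_sdiff_of_mem_powersetCard {a b : ℕ} {S : Finset ℕ}
    (hS : S ∈ (Icc 1 (a + b)).powersetCard a) : #(Icc 1 (a + b) \ S) = b := by
  obtain ⟨hsub, hcard⟩ := mem_powersetCard.1 hS
  rw [card_sdiff_of_subset hsub, Nat.card_Icc, hcard]; omega

lemma isLabelling_glue_elemOfRank (he : ∀ a b, e₁ a ≠ e₂ b) {S : Finset ℕ}
    (hS : S ∈ (Icc 1 (#A + #B)).powersetCard #A) {T₁ : α → ℕ} {T₂ : β → ℕ}
    (h₁ : IsLabelling A (Set.Icc 1 #A) T₁) (h₂ : IsLabelling B (Set.Icc 1 #B) T₂) :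
    IsLabelling (A.map e₁ ∪ B.map e₂) (Set.Icc 1 (#A + #B))
      (glue e₁ e₂ (elemOfRank S ∘ T₁) (elemOfRank (Icc 1 (#A + #B) \ S) ∘ T₂)) := by
  have := isLabelling_glue he
    (IsLabelling.elemOfRank_comp (S := S) (by rwa [(mem_powersetCard.1 hS).2]))
    (IsLabelling.elemOfRank_comp (by rwa [card_sdiff_of_mem_powersetCard hS]))
    (disjoint_coe.2 disjoint_sdiff)
  rwa [← coe_union, union_sdiff_of_subset (mem_powersetCard.1 hS).1, coe_Icc] at this

variable (e₁ e₂ A B) {P : (α → ℕ) → Prop} {Q : (β → ℕ) → Prop}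

noncomputable def shuffleEquiv (he : ∀ a b, e₁ a ≠ e₂ b)
    (hP : IsOrderInvariant A P) (hQ : IsOrderInvariant B Q) :
    {T : γ → ℕ // IsLabelling (A.map e₁ ∪ B.map e₂) (Set.Icc 1 (#A + #B)) T ∧
        P (T ∘ e₁) ∧ Q (T ∘ e₂)} ≃
      (Icc 1 (#A + #B)).powersetCard #A × {T // IsLabelling A (Set.Icc 1 #A) T ∧ P T} ×
        {T // IsLabelling B (Set.Icc 1 #B) T ∧ Q T} where
  toFun T :=
    (⟨A.image (T.1 ∘ e₁), T.2.1.image_comp_left_mem_powersetCard he⟩,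
      ⟨standardize A (T.1 ∘ e₁), (T.2.1.comp_left he).isLabelling_standardize
          T.2.1.zero_notMem_image_comp_left,
        (hP.standardize_iff _).2 T.2.2.1⟩,
      ⟨standardize B (T.1 ∘ e₂), (T.2.1.comp_right he).isLabelling_standardize
          T.2.1.zero_notMem_image_comp_right,
        (hQ.standardize_iff _).2 T.2.2.2⟩)
  invFun x :=
    ⟨glue e₁ e₂ (elemOfRank x.1 ∘ x.2.1.1) (elemOfRank (Icc 1 (#A + #B) \ x.1) ∘ x.2.2.1),
      isLabelling_glue_elemOfRank he x.1.2 x.2.1.2.1 x.2.2.2.1,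
      by
        rw [glue_comp_left, hP.elemOfRank_comp_iff (S := x.1)
          (by rw [(mem_powersetCard.1 x.1.2).2]; exact x.2.1.2.1)]
        exact x.2.1.2.2,
      by
        rw [glue_comp_right he, hQ.elemOfRank_comp_iff
          (by rw [card_sdiff_of_mem_powersetCard x.1.2]; exact x.2.2.2.1)]
        exact x.2.2.2.2⟩
  left_inv := by
    rintro ⟨T, hT, -⟩
    have hIcc : IsLabelling (A.map e₁ ∪ B.map e₂) ↑(Icc 1 (#A + #B)) T := by rwa [coe_Icc]
    refine Subtype.ext ?_
    dsimp only
    rw [← hIcc.image_comp_right he,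
      (hT.comp_left he).elemOfRank_comp_standardize hT.zero_notMem_image_comp_left,
      (hT.comp_right he).elemOfRank_comp_standardize hT.zero_notMem_image_comp_right,
      hT.glue_self he]
  right_inv := by
    rintro ⟨⟨S, hS⟩, ⟨T₁, h₁, -⟩, ⟨T₂, h₂, -⟩⟩
    have h₁' : IsLabelling A (Set.Icc 1 #S) T₁ := by rwa [(mem_powersetCard.1 hS).2]
    have h₂' : IsLabelling B (Set.Icc 1 #(Icc 1 (#A + #B) \ S)) T₂ := by
      rwa [card_sdiff_of_mem_powersetCard hS]
    have h0 : 0 ∉ S := fun h => by simpa using (mem_powersetCard.1 hS).1 h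
    refine Prod.ext (Subtype.ext ?_) (Prod.ext (Subtype.ext ?_) (Subtype.ext ?_)) <;>
      simp only [glue_comp_left, glue_comp_right he]
    · exact h₁'.image_elemOfRank_comp
    · exact h₁'.standardize_elemOfRank_comp h0
    · exact h₂'.standardize_elemOfRank_comp (by simp)

lemma card_shuffle (he : ∀ a b, e₁ a ≠ e₂ b) (hP : IsOrderInvariant A P)
    (hQ : IsOrderInvariant B Q) :
    Nat.card {T : γ → ℕ // IsLabelling (A.map e₁ ∪ B.map e₂) (Set.Icc 1 (#A + #B)) T ∧
        P (T ∘ e₁) ∧ Q (T ∘ e₂)} =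
      (#A + #B).choose #A * Nat.card {T // IsLabelling A (Set.Icc 1 #A) T ∧ P T} *
        Nat.card {T // IsLabelling B (Set.Icc 1 #B) T ∧ Q T} := by
  rw [Nat.card_congr (shuffleEquiv e₁ e₂ A B he hP hQ), Nat.card_prod, Nat.card_prod,
    Nat.card_eq_finsetCard, card_powersetCard, Nat.card_Icc, Nat.add_sub_cancel, mul_assoc]

end Shuffle

section Balanced

variable {ι κ : Type*} [LinearOrder ι] [LinearOrder κ]

def hookIn (D : Finset (ι × ι)) (c : ι × ι) : Finset (ι × ι) :=
  D.filter fun d => (d.1 = c.1 ∧ c.2 ≤ d.2) ∨ (d.2 = c.2 ∧ c.1 ≤ d.1)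

def armIn (D : Finset (ι × ι)) (c : ι × ι) : Finset (ι × ι) :=
  D.filter fun d => d.1 = c.1 ∧ c.2 < d.2

def IsBalanced (D : Finset (ι × ι)) (T : ι × ι → ℕ) : Prop :=
  ∀ c ∈ D, #((hookIn D c).filter fun d => T d < T c) = #(armIn D c)

def cellEmb (f : ι ↪o κ) : ι × ι ↪ κ × κ :=
  ⟨fun c => (f c.1, f c.2), fun _ _ h => Prod.ext (f.injective (Prod.ext_iff.1 h).1)
    (f.injective (Prod.ext_iff.1 h).2)⟩

@[simp]
lemma cellEmb_apply (f : ι ↪o κ) (c : ι × ι) : cellEmb f c = (f c.1, f c.2) := rfl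

lemma isOrderInvariant_isBalanced (D : Finset (ι × ι)) : IsOrderInvariant D (IsBalanced D) := by
  refine fun g T hg => forall₂_congr fun c hc => ?_
  simp only [Function.comp_apply]
  rw [filter_congr (s := hookIn D c) fun d hd =>
    hg.lt_iff_lt (Set.mem_image_of_mem T (mem_filter.1 hd).1) (Set.mem_image_of_mem T hc)]

variable {D D₁ D₂ : Finset (ι × ι)} {c : ι × ι}

lemma hookIn_union_of_separated (h : ∀ d ∈ D₂, c.1 ≠ d.1 ∧ c.2 ≠ d.2) :
    hookIn (D₁ ∪ D₂) c = hookIn D₁ c := by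
  rw [hookIn, filter_union, filter_false_of_mem (s := D₂) fun d hd => ?_, union_empty, hookIn]
  have := h d hd
  grind

lemma armIn_union_of_separated (h : ∀ d ∈ D₂, c.1 ≠ d.1 ∧ c.2 ≠ d.2) :
    armIn (D₁ ∪ D₂) c = armIn D₁ c := by
  rw [armIn, filter_union, filter_false_of_mem (s := D₂) fun d hd => ?_, union_empty, armIn]
  have := h d hd
  grind

lemma isBalanced_union {T : ι × ι → ℕ} (h : ∀ c ∈ D₁, ∀ d ∈ D₂, c.1 ≠ d.1 ∧ c.2 ≠ d.2) :
    IsBalanced (D₁ ∪ D₂) T ↔ IsBalanced D₁ T ∧ IsBalanced D₂ T := by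
  have h' : ∀ c ∈ D₂, ∀ d ∈ D₁, c.1 ≠ d.1 ∧ c.2 ≠ d.2 := fun c hc d hd =>
    ⟨(h d hd c hc).1.symm, (h d hd c hc).2.symm⟩
  refine forall_mem_union.trans (and_congr (forall₂_congr fun c hc => ?_)
    (forall₂_congr fun c hc => ?_))
  · rw [hookIn_union_of_separated (h c hc), armIn_union_of_separated (h c hc)]
  · rw [union_comm, hookIn_union_of_separated (h' c hc), armIn_union_of_separated (h' c hc)]

lemma hookIn_map (f : ι ↪o κ) (c : ι × ι) :
    hookIn (D.map (cellEmb f)) (cellEmb f c) = (hookIn D c).map (cellEmb f) := by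
  rw [hookIn, hookIn, filter_map]
  congr 1
  refine filter_congr fun d _ => ?_
  simp

lemma armIn_map (f : ι ↪o κ) (c : ι × ι) :
    armIn (D.map (cellEmb f)) (cellEmb f c) = (armIn D c).map (cellEmb f) := by
  rw [armIn, armIn, filter_map]
  congr 1
  refine filter_congr fun d _ => ?_
  simp

lemma isBalanced_map {T : κ × κ → ℕ} (f : ι ↪o κ) :
    IsBalanced (D.map (cellEmb f)) T ↔ IsBalanced D (T ∘ cellEmb f) := by
  refine forall_mem_map.trans (forall₂_congr fun c _ => ?_)
  rw [hookIn_map, armIn_map, filter_map, card_map, card_map]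
  rfl

end Balanced

section DirectSum

variable {k m : ℕ} (u : Equiv.Perm (Fin k)) (v : Equiv.Perm (Fin m))

lemma card_rothe {n : ℕ} (w : Equiv.Perm (Fin n)) : #(rothe w) = plen w := by
  refine card_nbij' (fun c => (c.1, w⁻¹ c.2)) (fun p => (p.1, w p.2)) ?_ ?_
    (fun _ _ => by simp) (fun _ _ => by simp)
  · intro c hc
    simp only [rothe, coe_filter, mem_univ, true_and] at hc ⊢
    exact ⟨hc.2, by simpa using hc.1⟩
  · intro p hp
    simp only [rothe, coe_filter, mem_univ, true_and] at hp ⊢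
    exact ⟨by simpa using hp.2, by simpa using hp.1⟩

lemma isBRT_iff {n : ℕ} (w : Equiv.Perm (Fin n)) (T : Fin n × Fin n → ℕ) :
    IsBRT w T ↔ IsLabelling (rothe w) (Set.Icc 1 #(rothe w)) T ∧ IsBalanced (rothe w) T := by
  rw [card_rothe]
  exact and_assoc.symm

lemma brtCard_eq {n : ℕ} (w : Equiv.Perm (Fin n)) :
    brtCard w = Nat.card {T // IsLabelling (rothe w) (Set.Icc 1 #(rothe w)) T ∧
      IsBalanced (rothe w) T} :=
  Nat.card_congr (Equiv.subtypeEquivRight (isBRT_iff w))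

lemma Fin.castAdd_lt_natAdd (i : Fin k) (j : Fin m) : Fin.castAdd m i < Fin.natAdd k j := by
  rw [Fin.lt_def, Fin.val_castAdd, Fin.val_natAdd]
  omega

lemma dsum_castAdd (i : Fin k) : dsum u v (Fin.castAdd m i) = Fin.castAdd m (u i) := by
  simp [dsum, ← finSumFinEquiv_apply_left]

lemma dsum_natAdd (i : Fin m) : dsum u v (Fin.natAdd k i) = Fin.natAdd k (v i) := by
  simp [dsum, ← finSumFinEquiv_apply_right]

lemma dsum_inv : (dsum u v)⁻¹ = dsum u⁻¹ v⁻¹ := by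
  refine inv_eq_of_mul_eq_one_right (Equiv.ext fun x => ?_)
  refine Fin.addCases (fun i => ?_) (fun i => ?_) x <;>
    simp [Equiv.Perm.mul_apply, dsum_castAdd, dsum_natAdd]

lemma rothe_dsum :
    rothe (dsum u v) = (rothe u).map (cellEmb (Fin.castAddOrderEmb m)) ∪
      (rothe v).map (cellEmb (Fin.natAddOrderEmb k)) := by
  ext ⟨x, y⟩
  refine Fin.addCases (fun i => ?_) (fun i => ?_) x <;>
    refine Fin.addCases (fun j => ?_) (fun j => ?_) y <;>
    simp [rothe, dsum_inv, dsum_castAdd, dsum_natAdd,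
      (Fin.strictMono_castAdd m).lt_iff_lt,
      Fin.castAdd_lt_natAdd, (Fin.castAdd_lt_natAdd _ _).ne, (Fin.castAdd_lt_natAdd _ _).ne',
      (Fin.castAdd_lt_natAdd _ _).not_gt]

lemma cellEmb_castAdd_ne_cellEmb_natAdd (a : Fin k × Fin k) (b : Fin m × Fin m) :
    cellEmb (Fin.castAddOrderEmb m) a ≠ cellEmb (Fin.natAddOrderEmb k) b :=
  fun h => (Fin.castAdd_lt_natAdd a.1 b.1).ne (Prod.ext_iff.1 h).1

lemma isBRT_dsum_iff (T : Fin (k + m) × Fin (k + m) → ℕ) :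
    IsBRT (dsum u v) T ↔
      IsLabelling ((rothe u).map (cellEmb (Fin.castAddOrderEmb m)) ∪
          (rothe v).map (cellEmb (Fin.natAddOrderEmb k))) (Set.Icc 1 (#(rothe u) + #(rothe v))) T ∧
        IsBalanced (rothe u) (T ∘ cellEmb (Fin.castAddOrderEmb m)) ∧
        IsBalanced (rothe v) (T ∘ cellEmb (Fin.natAddOrderEmb k)) := by
  have hsep : ∀ c ∈ (rothe u).map (cellEmb (Fin.castAddOrderEmb m)),
      ∀ d ∈ (rothe v).map (cellEmb (Fin.natAddOrderEmb k)), c.1 ≠ d.1 ∧ c.2 ≠ d.2 := by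
    simp only [mem_map, forall_exists_index, and_imp]
    rintro _ a - rfl _ b - rfl
    exact ⟨(Fin.castAdd_lt_natAdd a.1 b.1).ne, (Fin.castAdd_lt_natAdd a.2 b.2).ne⟩
  rw [isBRT_iff, rothe_dsum, isBalanced_union hsep, isBalanced_map, isBalanced_map,
    card_union_of_disjoint (disjoint_left.2 fun c hc hd => (hsep c hc c hd).1 rfl), card_map,
    card_map]

end DirectSum

/-- `|BRT(u ⊕ v)| = C(ℓ(u)+ℓ(v), ℓ(u)) · |BRT(u)| · |BRT(v)|`. -/
theorem brtCard_dsum {k m : ℕ} (u : Equiv.Perm (Fin k)) (v : Equiv.Perm (Fin m)) :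
    brtCard (dsum u v)
      = Nat.choose (plen u + plen v) (plen u) * brtCard u * brtCard v := by
  rw [brtCard, Nat.card_congr (Equiv.subtypeEquivRight (isBRT_dsum_iff u v)),
    card_shuffle _ _ _ _ cellEmb_castAdd_ne_cellEmb_natAdd (isOrderInvariant_isBalanced _)
      (isOrderInvariant_isBalanced _), ← brtCard_eq, ← brtCard_eq, card_rothe, card_rothe]
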